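/- arXiv:2509.09379 — 3 statements merged into one kernel-verified Lean document; each statement's English description precedes it below -/
import Mathlib

section
/- For analytic functions f, g on the unit disk, the Duhamel product satisfies the halved-segment formula: (f ⊛ g)(z) = ∫₀^{z/2} f(z-s)g'(s) ds + ∫₀^{z/2} g(z-s)f'(s) ds + f(z)g(0) + g(z)f(0) − f(z/2)g(z/2). -/
open Complex MeasureTheory Set Metric Filter ENNReal

noncomputable section

/-- The open unit disk in ℂ. -/
def 𝔻 : Set ℂ := Metric.ball (0 : ℂ) 1

/-- Normalized Lebesgue area measure on ℂ, `dA = (1/π) dx dy`. -/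
def dA : Measure ℂ := (ENNReal.ofReal (1 / Real.pi)) • (volume : Measure ℂ)

/-- Line integral `∫₀^z h(s) ds` along the segment from `0` to `z`. -/
def segInt (h : ℂ → ℂ) (z : ℂ) : ℂ := z * ∫ t in (0:ℝ)..1, h ((t : ℂ) * z)

/-- The Duhamel product `(f ⊛ g)(z) = ∫₀^z f'(z-s) g(s) ds + f(0) g(z)`. -/
def duh (f g : ℂ → ℂ) (z : ℂ) : ℂ :=
  segInt (fun s => deriv f (z - s) * g s) z + f 0 * g z

/-!
Split `∫₀^z f'(z-s) g(s) ds` at `z/2` and reflect `s ↦ z - s` on the far half: this produces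
`∫₀^{z/2} g(z-s) f'(s) ds` together with `∫₀^{z/2} f'(z-s) g(s) ds`. Integrating the latter by
parts against the primitive `s ↦ f(z-s) g(s)` of `f(z-s) g'(s) - f'(z-s) g(s)` turns it into
`∫₀^{z/2} f(z-s) g'(s) ds` plus the boundary terms `f(z) g(0) - f(z/2) g(z/2)`.
-/

lemma StarConvex.ofReal_mul_mem {U : Set ℂ} (hU : StarConvex ℝ 0 U) {z : ℂ} (hz : z ∈ U)
    {t : ℝ} (ht : t ∈ Icc (0:ℝ) 1) : (t : ℂ) * z ∈ U := by
  simpa only [Complex.real_smul] using hU.smul_mem hz ht.1 ht.2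

lemma intervalIntegrable_comp_ofReal_mul {h : ℂ → ℂ} {V : Set ℂ} (hh : ContinuousOn h V)
    {w : ℂ} (hw : ∀ t ∈ Icc (0:ℝ) 1, (t : ℂ) * w ∈ V) :
    IntervalIntegrable (fun t : ℝ => h (t * w)) volume 0 1 := by
  refine ContinuousOn.intervalIntegrable ?_
  rw [uIcc_of_le zero_le_one]
  exact hh.comp (by fun_prop) hw

lemma segInt_sub {h₁ h₂ : ℂ → ℂ} {w : ℂ}
    (h₁int : IntervalIntegrable (fun t : ℝ => h₁ (t * w)) volume 0 1)
    (h₂int : IntervalIntegrable (fun t : ℝ => h₂ (t * w)) volume 0 1) :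
    segInt (fun s => h₁ s - h₂ s) w = segInt h₁ w - segInt h₂ w := by
  simp only [segInt, intervalIntegral.integral_sub h₁int h₂int, mul_sub]

lemma segInt_eq_sub_of_hasDerivAt {H H' : ℂ → ℂ} {w : ℂ}
    (hderiv : ∀ t ∈ Icc (0:ℝ) 1, HasDerivAt H (H' (t * w)) (t * w))
    (hint : IntervalIntegrable (fun t : ℝ => H' (t * w)) volume 0 1) :
    segInt H' w = H w - H 0 := by
  have hcomp : ∀ t ∈ uIcc (0:ℝ) 1,
      HasDerivAt (fun t : ℝ => H (t * w)) (H' (t * w) * w) t := by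
    intro t ht
    rw [uIcc_of_le zero_le_one] at ht
    exact ((hderiv t ht).comp (t : ℂ) ((hasDerivAt_id (t : ℂ)).mul_const w)).comp_ofReal
      |>.congr_deriv (by simp)
  rw [segInt, mul_comm, ← intervalIntegral.integral_mul_const,
    intervalIntegral.integral_eq_sub_of_hasDerivAt hcomp (hint.mul_const w)]
  simp

lemma segInt_half (h : ℂ → ℂ) (z : ℂ) :
    segInt h (z / 2) = z * ∫ t in (0:ℝ)..(1/2 : ℝ), h (t * z) := by
  have hrescale : (∫ t in (0:ℝ)..1, h (t * (z / 2)))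
      = ∫ t in (0:ℝ)..1, (fun u : ℝ => h (u * z)) (t / 2) := by
    congr 1 with t
    congr 1
    push_cast
    ring
  rw [segInt, hrescale, intervalIntegral.integral_comp_div (fun u : ℝ => h (u * z)) two_ne_zero]
  norm_num
  ring

lemma segInt_eq_segInt_half_add_segInt_half_reflect (h : ℂ → ℂ) (z : ℂ)
    (hint : IntervalIntegrable (fun t : ℝ => h (t * z)) volume 0 1) :
    segInt h z = segInt h (z / 2) + segInt (fun s => h (z - s)) (z / 2) := by
  have hreflect : (∫ t in (0:ℝ)..(1/2 : ℝ), h (z - t * z))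
      = ∫ t in (1/2 : ℝ)..1, h (t * z) := by
    have := intervalIntegral.integral_comp_sub_left (fun t : ℝ => h (t * z)) (a := 0) (b := 1/2) 1
    norm_num at this
    rw [← this]
    congr 1
    ext t
    ring_nf
  rw [segInt_half, segInt_half, hreflect, ← mul_add,
    intervalIntegral.integral_add_adjacent_intervals
      (hint.mono_set (uIcc_subset_uIcc (by simp) (by norm_num)))
      (hint.mono_set (uIcc_subset_uIcc (by norm_num) (by simp))),
    segInt]

theorem duh_eq_halved_segment {U : Set ℂ} (hU : IsOpen U) (hU₀ : StarConvex ℝ 0 U)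
    {f g : ℂ → ℂ} (hf : DifferentiableOn ℂ f U) (hg : DifferentiableOn ℂ g U)
    {z : ℂ} (hz : z ∈ U) :
    duh f g z = segInt (fun s => f (z - s) * deriv g s) (z / 2)
      + segInt (fun s => g (z - s) * deriv f s) (z / 2)
      + f z * g 0 + g z * f 0 - f (z / 2) * g (z / 2) := by
  set V := U ∩ (z - ·) ⁻¹' U
  have hz₂ : z / 2 ∈ U := by
    simpa [div_eq_inv_mul] using hU₀.ofReal_mul_mem hz (t := 1/2) (by norm_num)
  have hzV : ∀ t ∈ Icc (0:ℝ) 1, (t : ℂ) * z ∈ V := fun t ht => by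
    refine ⟨hU₀.ofReal_mul_mem hz ht, ?_⟩
    have := hU₀.ofReal_mul_mem hz (t := 1 - t) (by constructor <;> linarith [ht.1, ht.2])
    simpa [sub_mul] using this
  have hz₂V : ∀ t ∈ Icc (0:ℝ) 1, (t : ℂ) * (z / 2) ∈ V := fun t ht => by
    refine ⟨hU₀.ofReal_mul_mem hz₂ ht, ?_⟩
    have := hU₀.ofReal_mul_mem hz (t := 1 - t / 2) (by constructor <;> linarith [ht.1, ht.2])
    simp only [mem_preimage]
    convert this using 1
    push_cast
    ring
  have hreflectOn : ∀ {φ : ℂ → ℂ}, ContinuousOn φ U → ContinuousOn (fun s => φ (z - s)) V :=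
    fun hφ => hφ.comp (by fun_prop) fun _ hs => hs.2
  have hf' := (hf.deriv hU).continuousOn
  have hg' := (hg.deriv hU).continuousOn
  have hsplit := segInt_eq_segInt_half_add_segInt_half_reflect (fun s => deriv f (z - s) * g s) z
    (intervalIntegrable_comp_ofReal_mul ((hreflectOn hf').mul (hg.continuousOn.mono
      inter_subset_left)) hzV)
  have hleft := intervalIntegrable_comp_ofReal_mul (h := fun s => f (z - s) * deriv g s)
    ((hreflectOn hf.continuousOn).mul (hg'.mono inter_subset_left)) hz₂V
  have hright := intervalIntegrable_comp_ofReal_mul (h := fun s => deriv f (z - s) * g s)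
    ((hreflectOn hf').mul (hg.continuousOn.mono inter_subset_left)) hz₂V
  have hparts : segInt (fun s => f (z - s) * deriv g s - deriv f (z - s) * g s) (z / 2)
      = f (z / 2) * g (z / 2) - f z * g 0 := by
    rw [segInt_eq_sub_of_hasDerivAt (H := fun s => f (z - s) * g s) _ (hleft.sub hright)]
    · simp only [show z - z / 2 = z / 2 by ring, sub_zero]
    intro t ht
    obtain ⟨hsU, hzsU⟩ := hz₂V t ht
    have hfz := ((hf.differentiableAt (hU.mem_nhds hzsU)).hasDerivAt).comp _
      ((hasDerivAt_id _).const_sub z)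
    exact (hfz.mul (hg.differentiableAt (hU.mem_nhds hsU)).hasDerivAt).congr_deriv (by simp; ring)
  rw [segInt_sub hleft hright] at hparts
  simp only [_root_.sub_sub_cancel] at hsplit
  rw [duh, hsplit]
  simp only [mul_comm (g (z - _))]
  linear_combination -hparts

theorem stmt5 (f g : ℂ → ℂ) (hf : AnalyticOn ℂ f 𝔻) (hg : AnalyticOn ℂ g 𝔻) :
    ∀ z ∈ 𝔻,
      duh f g z = segInt (fun s => f (z - s) * deriv g s) (z / 2)
        + segInt (fun s => g (z - s) * deriv f s) (z / 2)
        + f z * g 0 + g z * f 0 - f (z / 2) * g (z / 2) := fun _ hz =>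
  duh_eq_halved_segment isOpen_ball ((convex_ball 0 1).starConvex (mem_ball_self one_pos))
    hf.differentiableOn hg.differentiableOn hz
end
end

section
/- Let r > 0, 0 ≤ c < s < ∞ and μ a finite positive Borel measure on [0,1). Then μ is an s-Carleson measure (i.e. μ([t,1)) ≤ C(1-t)^s for all 0 ≤ t < 1) if and only if sup_{b∈D} ∫₀¹ (1-|b|)^r / ((1-t)^c (1-|b|t)^{s+r-c}) dμ(t) < ∞. -/
open MeasureTheory Set

noncomputable section

/-! With `δ = 1 - ‖b‖`, the integrand is bounded on `[0, 1)` both by `δ ^ r (1 - t) ^ (-(s + r))`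
and by `δ ^ (c - s) (1 - t) ^ (-c)`. Cover `[0, 1)` by the dyadic shells `ρ / 2 ≤ 1 - t ≤ ρ`
with `ρ = δ 2 ^ n` and `ρ = δ 2 ^ (-n)`, using the first bound on the former and the second on the
latter: the Carleson condition bounds the shell integrals by geometric series of ratios `2 ^ (-r)`
and `2 ^ (c - s)` whose sums do not depend on `δ`. Conversely, for `b = t₀ ∈ [0, 1)` the integrand
is at least `2 ^ (c - s - r) (1 - t₀) ^ (-s)` on `[t₀, 1)`. -/

def IsCarleson (μ : Measure ℝ) (s C : ℝ) : Prop :=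
  ∀ t : ℝ, 0 ≤ t → t < 1 → μ (Ico t 1) ≤ ENNReal.ofReal (C * (1 - t) ^ s)

def dyadicShell (ρ : ℝ) : Set ℝ := Ici 0 ∩ Icc (1 - ρ) (1 - ρ / 2)

def carlesonTestKernel (r c s a t : ℝ) : ℝ :=
  (1 - a) ^ r / ((1 - t) ^ c * (1 - a * t) ^ (s + r - c))

lemma measurableSet_dyadicShell (ρ : ℝ) : MeasurableSet (dyadicShell ρ) :=
  measurableSet_Ici.inter measurableSet_Icc

lemma dyadicShell_subset_Ico {ρ : ℝ} (hρ : 0 < ρ) : dyadicShell ρ ⊆ Ico 0 1 :=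
  fun _ ⟨h0, _, h1⟩ => ⟨h0, by linarith⟩

lemma ENNReal.tsum_ofReal_mul_pow {K q : ℝ} (hK : 0 ≤ K) (hq0 : 0 ≤ q) (hq1 : q < 1) :
    ∑' n : ℕ, ENNReal.ofReal (K * q ^ n) = ENNReal.ofReal (K * (1 - q)⁻¹) := by
  simp_rw [ENNReal.ofReal_mul hK, ENNReal.ofReal_pow hq0]
  rw [ENNReal.tsum_mul_left, ENNReal.tsum_geometric, ← ENNReal.ofReal_one,
    ← ENNReal.ofReal_sub _ hq0, ENNReal.ofReal_inv_of_pos (by linarith)]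

lemma mem_iUnion_dyadicShell {δ t : ℝ} (hδ : 0 < δ) (ht0 : 0 ≤ t) (ht1 : t < 1) :
    t ∈ (⋃ n : ℕ, dyadicShell (δ * 2 ^ n)) ∪ ⋃ n : ℕ, dyadicShell (δ * 2⁻¹ ^ n) := by
  rcases le_or_gt δ (1 - t) with hfar | hnear
  · obtain ⟨n, hn, hn'⟩ := exists_nat_pow_near ((one_le_div hδ).2 hfar) one_lt_two
    rw [le_div_iff₀ hδ] at hn
    rw [div_lt_iff₀ hδ] at hn'
    refine Or.inl (mem_iUnion.2 ⟨n + 1, ht0, by linarith, ?_⟩)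
    rw [pow_succ]
    linarith
  · obtain ⟨n, hn, hn'⟩ := exists_nat_pow_near_of_lt_one (div_pos (by linarith) hδ)
      ((div_le_one hδ).2 hnear.le) (by norm_num) (by norm_num : (2⁻¹ : ℝ) < 1)
    rw [lt_div_iff₀ hδ] at hn
    rw [div_le_iff₀ hδ] at hn'
    refine Or.inr (mem_iUnion.2 ⟨n, ht0, by linarith, ?_⟩)
    rw [pow_succ] at hn
    linarith

section Carleson

variable {μ : Measure ℝ} {s C : ℝ}

lemma IsCarleson.measure_dyadicShell_le (h : IsCarleson μ s C) (hC : 0 ≤ C) (hs : 0 ≤ s)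
    {ρ : ℝ} (hρ : 0 < ρ) : μ (dyadicShell ρ) ≤ ENNReal.ofReal (C * ρ ^ s) := by
  set t₀ := max (1 - ρ) 0
  have hsub : dyadicShell ρ ⊆ Ico t₀ 1 := fun t ⟨h0, h1, h2⟩ => ⟨max_le h1 h0, by linarith⟩
  have ht₀ : 0 ≤ 1 - t₀ := by linarith [max_le (by linarith : 1 - ρ ≤ 1) zero_le_one]
  have ht₀' : 1 - t₀ ≤ ρ := by linarith [le_max_left (1 - ρ) 0]
  calc μ (dyadicShell ρ) ≤ μ (Ico t₀ 1) := measure_mono hsub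
    _ ≤ ENNReal.ofReal (C * (1 - t₀) ^ s) := h t₀ (le_max_right _ _) (max_lt (by linarith) one_pos)
    _ ≤ ENNReal.ofReal (C * ρ ^ s) := by gcongr

lemma IsCarleson.setLIntegral_dyadicShell_le (h : IsCarleson μ s C) (hC : 0 ≤ C) (hs : 0 ≤ s)
    {A γ ρ : ℝ} (hA : 0 ≤ A) (hγ : 0 ≤ γ) (hρ : 0 < ρ) :
    ∫⁻ t in dyadicShell ρ, ENNReal.ofReal (A * (1 - t) ^ (-γ)) ∂μ ≤
      ENNReal.ofReal (A * C * 2 ^ γ * ρ ^ (s - γ)) := by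
  calc ∫⁻ t in dyadicShell ρ, ENNReal.ofReal (A * (1 - t) ^ (-γ)) ∂μ
      ≤ ∫⁻ _ in dyadicShell ρ, ENNReal.ofReal (A * (ρ / 2) ^ (-γ)) ∂μ := by
        refine setLIntegral_mono' (measurableSet_dyadicShell ρ) fun t ht => ?_
        exact ENNReal.ofReal_le_ofReal <| mul_le_mul_of_nonneg_left
          (Real.rpow_le_rpow_of_nonpos (by positivity) (by linarith [ht.2.2]) (by linarith)) hA
    _ = ENNReal.ofReal (A * (ρ / 2) ^ (-γ)) * μ (dyadicShell ρ) := setLIntegral_const _ _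
    _ ≤ ENNReal.ofReal (A * (ρ / 2) ^ (-γ)) * ENNReal.ofReal (C * ρ ^ s) := by
        gcongr
        exact h.measure_dyadicShell_le hC hs hρ
    _ = ENNReal.ofReal (A * C * 2 ^ γ * ρ ^ (s - γ)) := by
        rw [← ENNReal.ofReal_mul (by positivity), Real.div_rpow hρ.le zero_le_two,
          Real.rpow_neg zero_le_two, div_inv_eq_mul, Real.rpow_sub hρ, Real.rpow_neg hρ.le]
        ring_nf

lemma IsCarleson.setLIntegral_iUnion_dyadicShell_le (h : IsCarleson μ s C) (hC : 0 ≤ C)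
    (hs : 0 ≤ s) {κ ρ θ : ℝ} (hκ : 0 ≤ s + κ) (hρ : 0 < ρ) (hθ : 0 < θ) (hq : θ ^ (-κ) < 1) :
    ∫⁻ t in ⋃ n : ℕ, dyadicShell (ρ * θ ^ n), ENNReal.ofReal (ρ ^ κ * (1 - t) ^ (-(s + κ))) ∂μ ≤
      ENNReal.ofReal (C * 2 ^ (s + κ) * (1 - θ ^ (-κ))⁻¹) := by
  have hshell (n : ℕ) : ρ ^ κ * C * 2 ^ (s + κ) * (ρ * θ ^ n) ^ (s - (s + κ)) =
      C * 2 ^ (s + κ) * (θ ^ (-κ)) ^ n := by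
    rw [sub_add_cancel_left, Real.mul_rpow hρ.le (by positivity), Real.rpow_pow_comm hθ.le,
      Real.rpow_neg hρ.le]
    field_simp
  calc _ ≤ ∑' n : ℕ, ∫⁻ t in dyadicShell (ρ * θ ^ n),
          ENNReal.ofReal (ρ ^ κ * (1 - t) ^ (-(s + κ))) ∂μ := lintegral_iUnion_le _ _
    _ ≤ ∑' n : ℕ, ENNReal.ofReal (C * 2 ^ (s + κ) * (θ ^ (-κ)) ^ n) := by
        gcongr with n
        rw [← hshell]
        exact h.setLIntegral_dyadicShell_le hC hs (by positivity) hκ (by positivity)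
    _ = _ := ENNReal.tsum_ofReal_mul_pow (by positivity) (by positivity) hq

end Carleson

section TestKernel

variable {r c s a t : ℝ}

lemma carlesonTestKernel_le_of_far (hcsr : c ≤ s + r) (ha1 : a < 1)
    (ht0 : 0 ≤ t) (ht1 : t < 1) :
    carlesonTestKernel r c s a t ≤ (1 - a) ^ r * (1 - t) ^ (-(s + r)) := by
  have h1t : 0 < 1 - t := by linarith
  have hden : (1 - t) ^ (s + r) ≤ (1 - t) ^ c * (1 - a * t) ^ (s + r - c) := by
    rw [← add_sub_cancel c (s + r), Real.rpow_add h1t, add_sub_cancel_left]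
    gcongr
    nlinarith
  rw [Real.rpow_neg h1t.le, ← div_eq_mul_inv]
  exact div_le_div_of_nonneg_left (by positivity) (by positivity) hden

lemma carlesonTestKernel_le_of_near (hcsr : c ≤ s + r) (ha0 : 0 ≤ a) (ha1 : a < 1)
    (ht1 : t < 1) :
    carlesonTestKernel r c s a t ≤ (1 - a) ^ (c - s) * (1 - t) ^ (-c) := by
  have h1a : 0 < 1 - a := by linarith
  have h1t : 0 < 1 - t := by linarith
  have hden : (1 - t) ^ c * (1 - a) ^ (s + r - c) ≤ (1 - t) ^ c * (1 - a * t) ^ (s + r - c) := by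
    gcongr
    nlinarith
  calc carlesonTestKernel r c s a t ≤ (1 - a) ^ r / ((1 - t) ^ c * (1 - a) ^ (s + r - c)) :=
        div_le_div_of_nonneg_left (by positivity) (by positivity) hden
    _ = (1 - a) ^ (c - s) * (1 - t) ^ (-c) := by
        rw [div_mul_eq_div_div_swap, ← Real.rpow_sub h1a, Real.rpow_neg h1t.le]
        ring_nf

end TestKernel

section Characterization

variable {μ : Measure ℝ} {r c s C : ℝ}

lemma IsCarleson.exists_lintegral_carlesonTestKernel_le (h : IsCarleson μ s C) (hC : 0 ≤ C)
    (hr : 0 < r) (hc : 0 ≤ c) (hcs : c < s) :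
    ∃ M : ℝ, ∀ a : ℝ, 0 ≤ a → a < 1 →
      ∫⁻ t in Ico 0 1, ENNReal.ofReal (carlesonTestKernel r c s a t) ∂μ ≤ ENNReal.ofReal M := by
  have hs : 0 ≤ s := by linarith
  have hfar : (2 : ℝ) ^ (-r) < 1 := Real.rpow_lt_one_of_one_lt_of_neg one_lt_two (by linarith)
  have hnear : (2⁻¹ : ℝ) ^ (-(c - s)) < 1 :=
    Real.rpow_lt_one (by norm_num) (by norm_num) (by linarith)
  set Mfar := C * 2 ^ (s + r) * (1 - 2 ^ (-r))⁻¹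
  set Mnear := C * 2 ^ (s + (c - s)) * (1 - 2⁻¹ ^ (-(c - s)))⁻¹
  have hMfar : 0 ≤ Mfar := mul_nonneg (by positivity) (inv_nonneg.2 (by linarith))
  have hMnear : 0 ≤ Mnear := mul_nonneg (by positivity) (inv_nonneg.2 (by linarith))
  refine ⟨Mfar + Mnear, fun a ha0 ha1 => ?_⟩
  have hδ : 0 < 1 - a := by linarith
  set shells : ℝ → Set ℝ := fun θ => ⋃ n : ℕ, dyadicShell ((1 - a) * θ ^ n)
  have hsub {θ : ℝ} (hθ : 0 < θ) : shells θ ⊆ Ico 0 1 :=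
    iUnion_subset fun n => dyadicShell_subset_Ico (by positivity)
  have hmeas (θ : ℝ) : MeasurableSet (shells θ) :=
    MeasurableSet.iUnion fun n => measurableSet_dyadicShell _
  calc ∫⁻ t in Ico 0 1, ENNReal.ofReal (carlesonTestKernel r c s a t) ∂μ
      ≤ ∫⁻ t in shells 2 ∪ shells 2⁻¹, ENNReal.ofReal (carlesonTestKernel r c s a t) ∂μ :=
        lintegral_mono_set fun t ht => mem_iUnion_dyadicShell hδ ht.1 ht.2
    _ ≤ (∫⁻ t in shells 2, ENNReal.ofReal (carlesonTestKernel r c s a t) ∂μ) +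
        ∫⁻ t in shells 2⁻¹, ENNReal.ofReal (carlesonTestKernel r c s a t) ∂μ :=
        lintegral_union_le _ _ _
    _ ≤ (∫⁻ t in shells 2, ENNReal.ofReal ((1 - a) ^ r * (1 - t) ^ (-(s + r))) ∂μ) +
        ∫⁻ t in shells 2⁻¹,
          ENNReal.ofReal ((1 - a) ^ (c - s) * (1 - t) ^ (-(s + (c - s)))) ∂μ := by
        rw [add_sub_cancel]
        gcongr ?_ + ?_
        · refine setLIntegral_mono' (hmeas 2) fun t ht => ENNReal.ofReal_le_ofReal ?_
          obtain ⟨ht0, ht1⟩ := hsub two_pos ht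
          exact carlesonTestKernel_le_of_far (by linarith) ha1 ht0 ht1
        · refine setLIntegral_mono' (hmeas 2⁻¹) fun t ht => ENNReal.ofReal_le_ofReal ?_
          exact carlesonTestKernel_le_of_near (by linarith) ha0 ha1 (hsub (by norm_num) ht).2
    _ ≤ ENNReal.ofReal Mfar + ENNReal.ofReal Mnear := by
        gcongr
        · exact h.setLIntegral_iUnion_dyadicShell_le hC hs (by linarith) hδ two_pos hfar
        · exact h.setLIntegral_iUnion_dyadicShell_le hC hs (by linarith) hδ (by norm_num) hnear
    _ = ENNReal.ofReal (Mfar + Mnear) := (ENNReal.ofReal_add hMfar hMnear).symm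

lemma one_le_mul_carlesonTestKernel {a t : ℝ} (hc : 0 ≤ c) (hcsr : c ≤ s + r) (ha0 : 0 ≤ a)
    (hat : a ≤ t) (ht1 : t < 1) :
    1 ≤ 2 ^ (s + r - c) * (1 - a) ^ s * carlesonTestKernel r c s a t := by
  have h1a : 0 < 1 - a := by linarith
  have h1t : 0 < 1 - t := by linarith
  have h1at : 0 < 1 - a * t := by nlinarith
  rw [carlesonTestKernel, ← mul_div_assoc, one_le_div (by positivity)]
  calc (1 - t) ^ c * (1 - a * t) ^ (s + r - c) ≤ (1 - a) ^ c * (2 * (1 - a)) ^ (s + r - c) := by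
        gcongr
        nlinarith
    _ = 2 ^ (s + r - c) * (1 - a) ^ s * (1 - a) ^ r := by
        rw [Real.mul_rpow zero_le_two h1a.le, mul_left_comm, ← Real.rpow_add h1a, mul_assoc,
          ← Real.rpow_add h1a]
        ring_nf

lemma measure_Ico_le_mul_lintegral_carlesonTestKernel {a : ℝ} (hc : 0 ≤ c) (hcsr : c ≤ s + r)
    (ha0 : 0 ≤ a) (ha1 : a < 1) :
    μ (Ico a 1) ≤ ENNReal.ofReal (2 ^ (s + r - c) * (1 - a) ^ s) *
      ∫⁻ t in Ico 0 1, ENNReal.ofReal (carlesonTestKernel r c s a t) ∂μ := by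
  have hK : 0 ≤ 2 ^ (s + r - c) * (1 - a) ^ s := by
    have : 0 < 1 - a := by linarith
    positivity
  calc μ (Ico a 1) = ∫⁻ _ in Ico a 1, 1 ∂μ := (setLIntegral_one _).symm
    _ ≤ ∫⁻ t in Ico a 1, ENNReal.ofReal (2 ^ (s + r - c) * (1 - a) ^ s) *
          ENNReal.ofReal (carlesonTestKernel r c s a t) ∂μ := by
        refine setLIntegral_mono' measurableSet_Ico fun t ht => ?_
        rw [← ENNReal.ofReal_mul hK, ← ENNReal.ofReal_one]
        exact ENNReal.ofReal_le_ofReal (one_le_mul_carlesonTestKernel hc hcsr ha0 ht.1 ht.2)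
    _ = ENNReal.ofReal (2 ^ (s + r - c) * (1 - a) ^ s) *
          ∫⁻ t in Ico a 1, ENNReal.ofReal (carlesonTestKernel r c s a t) ∂μ :=
        lintegral_const_mul' _ _ ENNReal.ofReal_ne_top
    _ ≤ _ := by gcongr

lemma isCarleson_of_lintegral_carlesonTestKernel_le {M : ℝ} (hc : 0 ≤ c) (hcsr : c ≤ s + r)
    (hM : ∀ a : ℝ, 0 ≤ a → a < 1 →
      ∫⁻ t in Ico 0 1, ENNReal.ofReal (carlesonTestKernel r c s a t) ∂μ ≤ ENNReal.ofReal M) :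
    IsCarleson μ s (max M 1 * 2 ^ (s + r - c)) := by
  intro a ha0 ha1
  have hK : 0 ≤ 2 ^ (s + r - c) * (1 - a) ^ s := by
    have : 0 < 1 - a := by linarith
    positivity
  calc μ (Ico a 1) ≤ ENNReal.ofReal (2 ^ (s + r - c) * (1 - a) ^ s) *
        ∫⁻ t in Ico 0 1, ENNReal.ofReal (carlesonTestKernel r c s a t) ∂μ :=
      measure_Ico_le_mul_lintegral_carlesonTestKernel hc hcsr ha0 ha1
    _ ≤ ENNReal.ofReal (2 ^ (s + r - c) * (1 - a) ^ s) * ENNReal.ofReal M := by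
      gcongr
      exact hM a ha0 ha1
    _ ≤ ENNReal.ofReal (max M 1 * 2 ^ (s + r - c) * (1 - a) ^ s) := by
      rw [← ENNReal.ofReal_mul hK]
      refine ENNReal.ofReal_le_ofReal ?_
      nlinarith [le_max_left M 1]

end Characterization

theorem stmt13_general (r c s : ℝ) (hr : 0 < r) (hc : 0 ≤ c) (hcs : c < s)
    (μ : Measure ℝ) :
    (∃ C : ℝ, 0 < C ∧ ∀ t : ℝ, 0 ≤ t → t < 1 →
        μ (Set.Ico t 1) ≤ ENNReal.ofReal (C * (1 - t) ^ s)) ↔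
    (∃ M : ℝ, ∀ b : ℂ, ‖b‖ < 1 →
      (∫⁻ t in Set.Ico (0:ℝ) 1, ENNReal.ofReal (
        (1 - ‖b‖) ^ r / ((1 - t) ^ c * (1 - ‖b‖ * t) ^ (s + r - c))) ∂μ) ≤ ENNReal.ofReal M) := by
  constructor
  · rintro ⟨C, hC, hcar⟩
    obtain ⟨M, hM⟩ :=
      IsCarleson.exists_lintegral_carlesonTestKernel_le hcar hC.le hr hc hcs
    exact ⟨M, fun b hb => hM ‖b‖ (norm_nonneg b) hb⟩
  · rintro ⟨M, hM⟩
    refine ⟨max M 1 * 2 ^ (s + r - c), by positivity,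
      isCarleson_of_lintegral_carlesonTestKernel_le hc (by linarith) fun a ha0 ha1 => ?_⟩
    have hMa := hM a (by rwa [Complex.norm_of_nonneg ha0])
    rwa [Complex.norm_of_nonneg ha0] at hMa

theorem stmt13 (r c s : ℝ) (hr : 0 < r) (hc : 0 ≤ c) (hcs : c < s)
    (μ : Measure ℝ) [IsFiniteMeasure μ] (hsupp : μ (Set.Ico (0:ℝ) 1)ᶜ = 0) :
    (∃ C : ℝ, 0 < C ∧ ∀ t : ℝ, 0 ≤ t → t < 1 →
        μ (Set.Ico t 1) ≤ ENNReal.ofReal (C * (1 - t) ^ s)) ↔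
    (∃ M : ℝ, ∀ b : ℂ, ‖b‖ < 1 →
      (∫⁻ t in Set.Ico (0:ℝ) 1, ENNReal.ofReal (
        (1 - ‖b‖) ^ r / ((1 - t) ^ c * (1 - ‖b‖ * t) ^ (s + r - c))) ∂μ) ≤ ENNReal.ofReal M) :=
  stmt13_general r c s hr hc hcs μ

end
end

section
/- For w, a in the open unit disk and t > 1, r > 1, the integral I = ∫₀^{2π} dθ / (|1 - w̄e^{iθ}|^t |1 - āe^{iθ}|^r) satisfies I ≍ 1/((1-|w|²)^{t-1} |1 - wā|^r) + 1/((1-|a|²)^{r-1} |1 - wā|^t), with implicit constants independent of w, a. -/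
/-!
Write `d_b(θ) = |e^{iθ} - b| = |1 - b̄ e^{iθ}|` and `M = |1 - w ā|`. Since `M ≤ d_w + d_a`, at
every `θ` one of the two distances is at least `M / 2`, so the integrand is at most
`2^r M^{-r} d_w^{-t} + 2^t M^{-t} d_a^{-r}`. For `s > 1` the one-point integral `∫ d_b^{-s}` is
`≲ (1 - |b|²)^{1-s}`, because `d_b(arg b + u) ≳ (1 - |b|²) + |u|` on `[-π, π]`. Conversely, on the
arc of length `1 - |w|²` starting at `arg w` one has `d_w ≲ 1 - |w|²` and `d_a ≲ M`, which gives
the first term of the lower bound; the second one follows by exchanging `(w, t)` and `(a, r)`.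
-/

open Complex MeasureTheory Set Metric Filter ENNReal

noncomputable section

open scoped Real ComplexConjugate

lemma norm_one_sub_conj_mul_exp (b : ℂ) (θ : ℝ) :
    ‖1 - conj b * exp (θ * I)‖ = ‖exp (θ * I) - b‖ := by
  set ζ := exp (θ * I)
  have hζ : ζ * conj ζ = 1 := by simp [ζ, mul_conj, normSq_eq_norm_sq]
  calc ‖1 - conj b * ζ‖ = ‖ζ * conj (ζ - b)‖ := by
        congr 1; simp only [map_sub]; linear_combination -hζ
    _ = ‖ζ - b‖ := by rw [norm_mul, norm_conj, norm_exp_ofReal_mul_I, one_mul]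

lemma one_sub_norm_le_norm_exp_sub (b : ℂ) (θ : ℝ) : 1 - ‖b‖ ≤ ‖exp (θ * I) - b‖ := by
  simpa using norm_sub_norm_le (exp (θ * I)) b

lemma one_sub_norm_sq_pos {b : ℂ} (hb : ‖b‖ < 1) : 0 < 1 - ‖b‖ ^ 2 := by
  nlinarith [norm_nonneg b]

lemma norm_exp_sub_pos {b : ℂ} (hb : ‖b‖ < 1) (θ : ℝ) : 0 < ‖exp (θ * I) - b‖ :=
  (sub_pos.2 hb).trans_le (one_sub_norm_le_norm_exp_sub b θ)

lemma norm_exp_add_arg_sub (b : ℂ) (u : ℝ) :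
    ‖exp ((u + arg b : ℝ) * I) - b‖ = ‖exp (u * I) - ‖b‖‖ := by
  nth_rw 2 [← norm_mul_exp_arg_mul_I b]
  rw [Complex.ofReal_add, add_mul, exp_add, ← sub_mul, norm_mul, norm_exp_ofReal_mul_I, mul_one]

lemma norm_exp_sub_one_le (u : ℝ) : ‖exp (u * I) - 1‖ ≤ |u| := by
  simpa [mul_comm] using Real.norm_exp_I_mul_ofReal_sub_one_le (x := u)

lemma mul_abs_le_norm_exp_sub_one {u : ℝ} (hu : |u| ≤ π) :
    2 / π * |u| ≤ ‖exp (u * I) - 1‖ := by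
  rw [mul_comm (u : ℂ), norm_exp_I_mul_ofReal_sub_one, norm_mul, Real.norm_two, Real.norm_eq_abs]
  have := Real.mul_abs_le_abs_sin (x := u / 2) (by rw [abs_div, abs_two]; linarith)
  rw [abs_div, abs_two] at this
  linarith

lemma one_sub_norm_le_norm_one_sub_mul_conj (w : ℂ) {a : ℂ} (ha : ‖a‖ ≤ 1) :
    1 - ‖w‖ ≤ ‖1 - w * conj a‖ := by
  have := norm_sub_norm_le 1 (w * conj a)
  rw [norm_one, norm_mul, norm_conj] at this
  nlinarith [norm_nonneg w]

lemma norm_one_sub_mul_conj_comm (w a : ℂ) : ‖1 - a * conj w‖ = ‖1 - w * conj a‖ := by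
  rw [← norm_conj]; simp [mul_comm]

lemma abs_norm_one_sub_mul_conj_sub_le (w : ℂ) {a : ℂ} (ha : ‖a‖ ≤ 1) (θ : ℝ) :
    |‖1 - w * conj a‖ - ‖exp (θ * I) - a‖| ≤ ‖exp (θ * I) - w‖ := by
  rw [← norm_one_sub_conj_mul_exp]
  calc _ ≤ ‖1 - w * conj a - (1 - conj a * exp (θ * I))‖ := abs_norm_sub_norm_le _ _
    _ = ‖a‖ * ‖exp (θ * I) - w‖ := by rw [← norm_conj a, ← norm_mul]; ring_nf
    _ ≤ ‖exp (θ * I) - w‖ := mul_le_of_le_one_left (norm_nonneg _) ha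

lemma abs_norm_exp_sub_sub_norm_exp_sub_one_le {ρ : ℝ} (hρ : ρ ≤ 1) (u : ℝ) :
    |‖exp (u * I) - ρ‖ - ‖exp (u * I) - 1‖| ≤ 1 - ρ := by
  calc _ ≤ ‖exp (u * I) - ρ - (exp (u * I) - 1)‖ := abs_norm_sub_norm_le _ _
    _ = 1 - ρ := by
      rw [show exp (u * I) - ρ - (exp (u * I) - 1) = ((1 - ρ : ℝ) : ℂ) by push_cast; ring,
        norm_real, Real.norm_eq_abs, abs_of_nonneg (by linarith)]

lemma norm_exp_add_arg_sub_le {b : ℂ} (hb : ‖b‖ ≤ 1) (u : ℝ) :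
    ‖exp ((u + arg b : ℝ) * I) - b‖ ≤ |u| + (1 - ‖b‖) := by
  rw [norm_exp_add_arg_sub]
  have := abs_norm_exp_sub_sub_norm_exp_sub_one_le hb u
  linarith [abs_le.1 this, norm_exp_sub_one_le u]

lemma le_norm_exp_add_arg_sub {b : ℂ} (hb : ‖b‖ < 1) {u : ℝ} (hu : |u| ≤ π) :
    (1 - ‖b‖ ^ 2 + |u| / π) / 4 ≤ ‖exp ((u + arg b : ℝ) * I) - b‖ := by
  have h₁ := one_sub_norm_le_norm_exp_sub b (u + arg b)
  have h₂ := abs_le.1 (abs_norm_exp_sub_sub_norm_exp_sub_one_le hb.le u)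
  have h₃ := mul_abs_le_norm_exp_sub_one hu
  rw [← norm_exp_add_arg_sub] at h₂
  -- averaging the lower bounds `1 - ‖b‖` and `2|u|/π - (1 - ‖b‖)` gives `|u|/π`
  have : 2 / π * |u| = 2 * (|u| / π) := by ring
  nlinarith [norm_nonneg b]

section IntervalIntegral

variable {E : Type*} [NormedAddCommGroup E] [NormedSpace ℝ E]

theorem intervalIntegral.integral_comp_abs {f : ℝ → E} {c : ℝ} (hc : 0 ≤ c)
    (hf : IntervalIntegrable (fun u => f |u|) volume (-c) c) :
    ∫ u in -c..c, f |u| = (2 : ℝ) • ∫ u in 0..c, f u := by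
  have hneg : ∫ u in -c..0, f |u| = ∫ u in 0..c, f |u| := by
    simpa using (intervalIntegral.integral_comp_neg (a := 0) (b := c) (fun u => f |u|)).symm
  have habs : ∫ u in 0..c, f |u| = ∫ u in 0..c, f u :=
    intervalIntegral.integral_congr fun u hu => by
      rw [abs_of_nonneg (uIcc_of_le hc ▸ hu).1]
  rw [← intervalIntegral.integral_add_adjacent_intervals (b := 0)
    (hf.mono_set (uIcc_subset_uIcc_left (by simp [uIcc_of_le, hc])))
    (hf.mono_set (uIcc_subset_uIcc_right (by simp [uIcc_of_le, hc]))), hneg, habs, two_smul]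

theorem Function.Periodic.intervalIntegral_comp_add_right {f : ℝ → E} {T : ℝ}
    (hf : Function.Periodic f T) (a c : ℝ) :
    ∫ u in a..a + T, f (u + c) = ∫ u in 0..T, f u := by
  rw [intervalIntegral.integral_comp_add_right, add_right_comm,
    hf.intervalIntegral_add_eq (a + c) 0, zero_add]

end IntervalIntegral

lemma integral_add_div_rpow_neg_le {δ c s : ℝ} (hδ : 0 < δ) (hc : 0 < c) (hs : 1 < s) :
    ∫ u in 0..c, (δ + u / c) ^ (-s) ≤ c / (s - 1) / δ ^ (s - 1) := by
  have h0 : (0 : ℝ) ∉ uIcc δ (δ + 1) := by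
    rw [uIcc_of_le (by linarith)]; exact fun h => hδ.not_ge h.1
  have hsub := intervalIntegral.integral_comp_add_div (a := 0) (b := c) (fun x => x ^ (-s)) hc.ne' δ
  rw [hsub, zero_div, add_zero, div_self hc.ne', integral_rpow (Or.inr ⟨by linarith, h0⟩),
    smul_eq_mul, show -s + 1 = -(s - 1) by ring, Real.rpow_neg hδ.le, Real.rpow_neg (by linarith)]
  have hy : 0 ≤ ((δ + 1) ^ (s - 1))⁻¹ := by positivity
  calc c * ((((δ + 1) ^ (s - 1))⁻¹ - (δ ^ (s - 1))⁻¹) / -(s - 1))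
      = c / (s - 1) * ((δ ^ (s - 1))⁻¹ - ((δ + 1) ^ (s - 1))⁻¹) := by
        field_simp; ring
    _ ≤ c / (s - 1) * (δ ^ (s - 1))⁻¹ := by
        gcongr; linarith
    _ = c / (s - 1) / δ ^ (s - 1) := (div_eq_mul_inv _ _).symm

lemma periodic_exp_ofReal_mul_I : Function.Periodic (fun θ : ℝ => exp (θ * I)) (2 * π) :=
  fun θ => by simpa using exp_mul_I_periodic (θ : ℂ)

lemma continuous_inv_norm_exp_sub_rpow {b : ℂ} (hb : ‖b‖ < 1) (s : ℝ) :
    Continuous fun θ : ℝ => (‖exp (θ * I) - b‖ ^ s)⁻¹ :=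
  ((by fun_prop : Continuous fun θ : ℝ => ‖exp (θ * I) - b‖).rpow_const
    fun θ => Or.inl (norm_exp_sub_pos hb θ).ne').inv₀ fun θ =>
      (Real.rpow_pos_of_pos (norm_exp_sub_pos hb θ) s).ne'

lemma continuous_inv_norm_exp_sub_rpow_mul {w a : ℂ} (hw : ‖w‖ < 1) (ha : ‖a‖ < 1) (t r : ℝ) :
    Continuous fun θ : ℝ => (‖exp (θ * I) - w‖ ^ t * ‖exp (θ * I) - a‖ ^ r)⁻¹ := by
  simp_rw [mul_inv]
  exact (continuous_inv_norm_exp_sub_rpow hw t).mul (continuous_inv_norm_exp_sub_rpow ha r)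

lemma integral_inv_norm_exp_sub_rpow_le {s : ℝ} (hs : 1 < s) {b : ℂ} (hb : ‖b‖ < 1) :
    ∫ θ in 0..2 * π, (‖exp (θ * I) - b‖ ^ s)⁻¹
      ≤ 4 ^ s * (2 * π / (s - 1)) / (1 - ‖b‖ ^ 2) ^ (s - 1) := by
  set δ := 1 - ‖b‖ ^ 2
  have hδ : 0 < δ := one_sub_norm_sq_pos hb
  set g := fun θ : ℝ => (‖exp (θ * I) - b‖ ^ s)⁻¹
  have hg : Continuous g := continuous_inv_norm_exp_sub_rpow hb s
  have hg_periodic : Function.Periodic g (2 * π) := fun θ => by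
    simp only [g, periodic_exp_ofReal_mul_I θ]
  set f := fun x : ℝ => (δ + x / π) ^ (-s)
  have hf : Continuous fun u => f |u| := by
    exact Continuous.rpow_const (by fun_prop) fun u => Or.inl (by positivity)
  have hpt : ∀ u ∈ Icc (-π) π, g (u + arg b) ≤ 4 ^ s * f |u| := by
    intro u hu
    have hlow := le_norm_exp_add_arg_sub hb (abs_le.2 hu)
    have : 0 < δ + |u| / π := by positivity
    calc g (u + arg b) ≤ (((δ + |u| / π) / 4) ^ s)⁻¹ := by
          simp only [g]; gcongr
      _ = 4 ^ s * f |u| := by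
        simp only [f]
        rw [Real.div_rpow this.le (by norm_num), Real.rpow_neg this.le, inv_div, div_eq_mul_inv]
  calc ∫ θ in 0..2 * π, g θ = ∫ u in -π..-π + 2 * π, g (u + arg b) :=
        (hg_periodic.intervalIntegral_comp_add_right _ _).symm
    _ ≤ ∫ u in -π..π, 4 ^ s * f |u| := by
        rw [show -π + 2 * π = π by ring]
        exact intervalIntegral.integral_mono_on (by linarith [Real.pi_pos])
          ((hg.comp (continuous_add_const _)).intervalIntegrable _ _)
          ((continuous_const.mul hf).intervalIntegrable _ _) hpt
    _ = 4 ^ s * (2 * ∫ u in 0..π, f u) := by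
        rw [intervalIntegral.integral_const_mul,
          intervalIntegral.integral_comp_abs Real.pi_pos.le (hf.intervalIntegrable _ _),
          smul_eq_mul]
    _ ≤ 4 ^ s * (2 * (π / (s - 1) / δ ^ (s - 1))) := by
        gcongr; exact integral_add_div_rpow_neg_le hδ Real.pi_pos hs
    _ = 4 ^ s * (2 * π / (s - 1)) / δ ^ (s - 1) := by ring

lemma inv_rpow_le_of_le_two_mul {A M t : ℝ} (hM : 0 < M) (ht : 0 ≤ t) (h : M ≤ 2 * A) :
    (A ^ t)⁻¹ ≤ 2 ^ t / M ^ t :=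
  calc (A ^ t)⁻¹ ≤ ((M / 2) ^ t)⁻¹ := by gcongr; linarith
    _ = 2 ^ t / M ^ t := by rw [Real.div_rpow hM.le zero_le_two, inv_div]

lemma inv_rpow_mul_rpow_le {A B M t r : ℝ} (hA : 0 < A) (hB : 0 < B) (hM : 0 < M)
    (ht : 0 ≤ t) (hr : 0 ≤ r) (h : M ≤ A + B) :
    (A ^ t * B ^ r)⁻¹ ≤ 2 ^ r / M ^ r * (A ^ t)⁻¹ + 2 ^ t / M ^ t * (B ^ r)⁻¹ := by
  rw [mul_inv]
  rcases le_total B A with hBA | hAB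
  · calc (A ^ t)⁻¹ * (B ^ r)⁻¹ ≤ 2 ^ t / M ^ t * (B ^ r)⁻¹ := by
          gcongr; exact inv_rpow_le_of_le_two_mul hM ht (by linarith)
      _ ≤ _ := le_add_of_nonneg_left (by positivity)
  · calc (A ^ t)⁻¹ * (B ^ r)⁻¹ ≤ 2 ^ r / M ^ r * (A ^ t)⁻¹ := by
          rw [mul_comm]; gcongr; exact inv_rpow_le_of_le_two_mul hM hr (by linarith)
      _ ≤ _ := le_add_of_nonneg_right (by positivity)

theorem integral_inv_norm_exp_sub_rpow_mul_le {t r : ℝ} (ht : 1 < t) (hr : 1 < r) {w a : ℂ}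
    (hw : ‖w‖ < 1) (ha : ‖a‖ < 1) :
    ∫ θ in 0..2 * π, (‖exp (θ * I) - w‖ ^ t * ‖exp (θ * I) - a‖ ^ r)⁻¹
      ≤ 2 ^ r * (4 ^ t * (2 * π / (t - 1))) * ((1 - ‖w‖ ^ 2) ^ (t - 1) * ‖1 - w * conj a‖ ^ r)⁻¹
        + 2 ^ t * (4 ^ r * (2 * π / (r - 1))) *
          ((1 - ‖a‖ ^ 2) ^ (r - 1) * ‖1 - w * conj a‖ ^ t)⁻¹ := by
  set M := ‖1 - w * conj a‖
  have hM : 0 < M := (sub_pos.2 hw).trans_le (one_sub_norm_le_norm_one_sub_mul_conj w ha.le)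
  have hpt : ∀ θ : ℝ, (‖exp (θ * I) - w‖ ^ t * ‖exp (θ * I) - a‖ ^ r)⁻¹
      ≤ 2 ^ r / M ^ r * (‖exp (θ * I) - w‖ ^ t)⁻¹ + 2 ^ t / M ^ t * (‖exp (θ * I) - a‖ ^ r)⁻¹ :=
    fun θ => inv_rpow_mul_rpow_le (norm_exp_sub_pos hw θ) (norm_exp_sub_pos ha θ) hM
      (by linarith) (by linarith)
      (by linarith [abs_le.1 (abs_norm_one_sub_mul_conj_sub_le w ha.le θ)])
  have hint : ∀ {b : ℂ}, ‖b‖ < 1 → ∀ s c : ℝ, IntervalIntegrable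
      (fun θ : ℝ => c * (‖exp (θ * I) - b‖ ^ s)⁻¹) volume 0 (2 * π) :=
    fun hb s c =>
      (continuous_const.mul (continuous_inv_norm_exp_sub_rpow hb s)).intervalIntegrable _ _
  calc _ ≤ ∫ θ in 0..2 * π, (2 ^ r / M ^ r * (‖exp (θ * I) - w‖ ^ t)⁻¹
          + 2 ^ t / M ^ t * (‖exp (θ * I) - a‖ ^ r)⁻¹) :=
        intervalIntegral.integral_mono_on (by positivity)
          ((continuous_inv_norm_exp_sub_rpow_mul hw ha t r).intervalIntegrable _ _)
          ((hint hw t _).add (hint ha r _)) fun θ _ => hpt θ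
    _ = 2 ^ r / M ^ r * (∫ θ in 0..2 * π, (‖exp (θ * I) - w‖ ^ t)⁻¹)
          + 2 ^ t / M ^ t * ∫ θ in 0..2 * π, (‖exp (θ * I) - a‖ ^ r)⁻¹ := by
        rw [intervalIntegral.integral_add (hint hw t _) (hint ha r _),
          intervalIntegral.integral_const_mul, intervalIntegral.integral_const_mul]
    _ ≤ 2 ^ r / M ^ r * (4 ^ t * (2 * π / (t - 1)) / (1 - ‖w‖ ^ 2) ^ (t - 1))
          + 2 ^ t / M ^ t * (4 ^ r * (2 * π / (r - 1)) / (1 - ‖a‖ ^ 2) ^ (r - 1)) := by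
        gcongr
        · exact integral_inv_norm_exp_sub_rpow_le ht hw
        · exact integral_inv_norm_exp_sub_rpow_le hr ha
    _ = _ := by ring

theorem le_integral_inv_norm_exp_sub_rpow_mul {t r : ℝ} (ht : 0 ≤ t) (hr : 0 ≤ r) {w a : ℂ}
    (hw : ‖w‖ < 1) (ha : ‖a‖ < 1) :
    (2 ^ t * 5 ^ r)⁻¹ * ((1 - ‖w‖ ^ 2) ^ (t - 1) * ‖1 - w * conj a‖ ^ r)⁻¹
      ≤ ∫ θ in 0..2 * π, (‖exp (θ * I) - w‖ ^ t * ‖exp (θ * I) - a‖ ^ r)⁻¹ := by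
  set δ := 1 - ‖w‖ ^ 2
  set M := ‖1 - w * conj a‖
  set F := fun θ : ℝ => (‖exp (θ * I) - w‖ ^ t * ‖exp (θ * I) - a‖ ^ r)⁻¹
  have hw₀ := norm_nonneg w
  have hδ : 0 < δ := one_sub_norm_sq_pos hw
  have hδ_le : δ ≤ 2 * (1 - ‖w‖) := by nlinarith
  have hδ_le' : 1 - ‖w‖ ≤ δ := by nlinarith
  have hδM : δ ≤ 2 * M :=
    hδ_le.trans (by linarith [one_sub_norm_le_norm_one_sub_mul_conj w ha.le])
  have hF : Continuous F := continuous_inv_norm_exp_sub_rpow_mul hw ha t r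
  have hF_periodic : Function.Periodic F (2 * π) := fun θ => by
    simp only [F, periodic_exp_ofReal_mul_I θ]
  have harc : ∀ u ∈ Icc 0 δ, ((2 * δ) ^ t * (5 * M) ^ r)⁻¹ ≤ F (u + arg w) := by
    intro u hu
    have hA := norm_exp_add_arg_sub_le hw.le u
    have hB := abs_le.1 (abs_norm_one_sub_mul_conj_sub_le w ha.le (u + arg w))
    rw [abs_of_nonneg hu.1] at hA
    have := norm_exp_sub_pos hw (u + arg w)
    have := norm_exp_sub_pos ha (u + arg w)
    simp only [F]
    gcongr <;> linarith [hu.2]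
  calc (2 ^ t * 5 ^ r)⁻¹ * (δ ^ (t - 1) * M ^ r)⁻¹
      = ∫ u in 0..δ, ((2 * δ) ^ t * (5 * M) ^ r)⁻¹ := by
        rw [intervalIntegral.integral_const, smul_eq_mul, sub_zero,
          Real.mul_rpow zero_le_two hδ.le, Real.mul_rpow (by norm_num) (by positivity),
          Real.rpow_sub_one hδ.ne']
        field_simp
    _ ≤ ∫ u in 0..δ, F (u + arg w) :=
        intervalIntegral.integral_mono_on hδ.le intervalIntegrable_const
          ((hF.comp (continuous_add_const _)).intervalIntegrable _ _) harc
    _ ≤ ∫ u in 0..0 + 2 * π, F (u + arg w) :=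
        intervalIntegral.integral_mono_interval le_rfl hδ.le
          (by linarith [Real.pi_gt_three]) (Eventually.of_forall fun u => by positivity)
          ((hF.comp (continuous_add_const _)).intervalIntegrable _ _)
    _ = ∫ θ in 0..2 * π, F θ := hF_periodic.intervalIntegral_comp_add_right _ _

theorem stmt15 (t r : ℝ) (ht : 1 < t) (hr : 1 < r) :
    ∃ C₁ C₂ : ℝ, 0 < C₁ ∧ 0 < C₂ ∧ ∀ w ∈ 𝔻, ∀ a ∈ 𝔻,
      C₁ * (1 / ((1 - ‖w‖ ^ 2) ^ (t - 1) *
              ‖1 - w * (starRingEnd ℂ) a‖ ^ r) +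
            1 / ((1 - ‖a‖ ^ 2) ^ (r - 1) *
              ‖1 - w * (starRingEnd ℂ) a‖ ^ t))
        ≤ (∫ θ in (0:ℝ)..(2 * Real.pi),
            1 / (‖1 - (starRingEnd ℂ) w * Complex.exp (θ * Complex.I)‖ ^ t *
                 ‖1 - (starRingEnd ℂ) a * Complex.exp (θ * Complex.I)‖ ^ r)) ∧
      (∫ θ in (0:ℝ)..(2 * Real.pi),
          1 / (‖1 - (starRingEnd ℂ) w * Complex.exp (θ * Complex.I)‖ ^ t *
               ‖1 - (starRingEnd ℂ) a * Complex.exp (θ * Complex.I)‖ ^ r))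
        ≤ C₂ * (1 / ((1 - ‖w‖ ^ 2) ^ (t - 1) *
              ‖1 - w * (starRingEnd ℂ) a‖ ^ r) +
            1 / ((1 - ‖a‖ ^ 2) ^ (r - 1) *
              ‖1 - w * (starRingEnd ℂ) a‖ ^ t)) := by
  set c₁ : ℝ := (2 ^ t * 5 ^ r)⁻¹
  set c₂ : ℝ := (2 ^ r * 5 ^ t)⁻¹
  set K₁ : ℝ := 2 ^ r * (4 ^ t * (2 * π / (t - 1)))
  set K₂ : ℝ := 2 ^ t * (4 ^ r * (2 * π / (r - 1)))
  have hK₁ : 0 < K₁ := by have := sub_pos.2 ht; positivity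
  have hK₂ : 0 < K₂ := by have := sub_pos.2 hr; positivity
  refine ⟨min c₁ c₂ / 2, K₁ + K₂, by positivity, by positivity, fun w hw a ha => ?_⟩
  replace hw : ‖w‖ < 1 := mem_ball_zero_iff.1 hw
  replace ha : ‖a‖ < 1 := mem_ball_zero_iff.1 ha
  simp only [norm_one_sub_conj_mul_exp, one_div]
  set X := ((1 - ‖w‖ ^ 2) ^ (t - 1) * ‖1 - w * conj a‖ ^ r)⁻¹
  set Y := ((1 - ‖a‖ ^ 2) ^ (r - 1) * ‖1 - w * conj a‖ ^ t)⁻¹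
  have hX : 0 ≤ X := by have := one_sub_norm_sq_pos hw; positivity
  have hY : 0 ≤ Y := by have := one_sub_norm_sq_pos ha; positivity
  have hlowX : c₁ * X ≤ _ :=
    le_integral_inv_norm_exp_sub_rpow_mul (by linarith) (by linarith) hw ha
  have hlowY :=
    le_integral_inv_norm_exp_sub_rpow_mul (t := r) (r := t) (by linarith) (by linarith) ha hw
  rw [norm_one_sub_mul_conj_comm] at hlowY
  simp_rw [mul_comm (‖exp (_ * I) - a‖ ^ r)] at hlowY
  have hup := integral_inv_norm_exp_sub_rpow_mul_le ht hr hw ha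
  have h₁ := mul_le_mul_of_nonneg_right (min_le_left c₁ c₂) hX
  have h₂ := mul_le_mul_of_nonneg_right (min_le_right c₁ c₂) hY
  have h₃ := mul_nonneg hK₁.le hY
  have h₄ := mul_nonneg hK₂.le hX
  exact ⟨by linarith, by linarith⟩
end
end
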